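/- Let H > 0 be a real number and let λ : ℕ → ℝ be finitely supported. For d ∈ ℕ set γ_{d,H} = Σ_{m ≥ 1, gcd(m,d)=1} (d/(πm) · sin(πmH/d))², and write ψ(x) = {x}(1 − {x}) with {x} the fractional part. Then Σ_{d₁,d₂ ≥ 1} (λ_{d₁}λ_{d₂}/(d₁d₂))·gcd(d₁,d₂)²·ψ(H/gcd(d₁,d₂)) = 2·Σ_{d ≥ 1} γ_{d,H}·(Σ_{m ≥ 1, d | m} λ_m/m)². -/

import Mathlib

open Real
open scoped Classical


lemma bern2_eval (y : ℝ) :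
    (Polynomial.map (algebraMap ℚ ℝ) (Polynomial.bernoulli 2)).eval y = y^2 - y + 1/6 := by
  have h2 : bernoulli 2 = 1/6 := by
    rw [bernoulli_eq_bernoulli'_of_ne_one (by decide : 2 ≠ 1), bernoulli'_two]
  simp [Polynomial.bernoulli, Finset.sum_range_succ, bernoulli_zero, bernoulli_one, h2]
  ring

lemma sin_sq_hasSum (x : ℝ) :
    HasSum (fun m : ℕ => (Real.sin (π * m * x) / (π * m)) ^ 2)
      (Int.fract x * (1 - Int.fract x) / 2) := by
  set t := Int.fract x with htdef
  have ht : t ∈ Set.Icc (0:ℝ) 1 := ⟨Int.fract_nonneg x, (Int.fract_lt_one x).le⟩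
  have h1 := hasSum_one_div_nat_pow_mul_cos (k := 1) one_ne_zero ht
  have h0 := hasSum_one_div_nat_pow_mul_cos (k := 1) one_ne_zero
    (Set.left_mem_Icc.mpr zero_le_one)
  rw [bern2_eval] at h1 h0
  have h := (h0.sub h1).mul_left (1/(2*π^2))
  have hπ : (π : ℝ) ≠ 0 := Real.pi_ne_zero
  convert h using 1
  · rfl
  · funext n
    rcases Nat.eq_zero_or_pos n with hn | hn
    · subst hn; simp
    · have hn0 : (n:ℝ) ≠ 0 := Nat.cast_ne_zero.mpr hn.ne'
      have hc : Real.cos (2 * π * n * x) = Real.cos (2 * π * n * t) := by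
        have hx : (⌊x⌋ : ℝ) + t = x := Int.floor_add_fract x
        have harg : 2 * π * (n:ℝ) * x = 2 * π * n * t + ((n * ⌊x⌋ : ℤ) : ℝ) * (2 * π) := by
          push_cast
          linear_combination 2 * π * (n:ℝ) * hx.symm
        rw [harg, Real.cos_add_int_mul_two_pi]
      have hs : Real.sin (π * n * x) ^ 2 = 1/2 - Real.cos (2 * π * n * t)/2 := by
        rw [Real.sin_sq_eq_half_sub, show 2 * (π * (n:ℝ) * x) = 2 * π * n * x by ring, hc]
      rw [div_pow, hs]
      simp only [mul_zero, Real.cos_zero, mul_one, pow_succ, pow_zero, one_mul]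
      field_simp
  · norm_num
    field_simp
    ring

noncomputable def gam (H : ℝ) (d : ℕ) : ℝ :=
  ∑' n : ℕ, if 1 ≤ n ∧ Nat.gcd n d = 1 then ((d : ℝ) / (π * n) * Real.sin (π * n * H / d)) ^ 2 else 0

lemma gamma_decomp (H : ℝ) {g : ℕ} (hg : 1 ≤ g) :
    (g:ℝ)^2 * (Int.fract (H/g) * (1 - Int.fract (H/g))) = 2 * ∑ d ∈ g.divisors, gam H d := by
  classical
  have hπ : (π : ℝ) ≠ 0 := Real.pi_ne_zero
  have hg0 : g ≠ 0 := by omega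
  have hgR : (g:ℝ) ≠ 0 := Nat.cast_ne_zero.mpr hg0
  set F : ℕ → ℝ := fun m => ((g:ℝ) / (π * m) * Real.sin (π * m * H / g)) ^ 2 with hFdef
  have hF : HasSum F ((g:ℝ)^2 * (Int.fract (H/g) * (1 - Int.fract (H/g)) / 2)) := by
    have := (sin_sq_hasSum (H/g)).mul_left ((g:ℝ)^2)
    convert this using 1
    · rfl
    funext m
    show ((g:ℝ) / (π * m) * Real.sin (π * m * H / g)) ^ 2
       = (g:ℝ)^2 * (Real.sin (π * m * (H/g)) / (π * m)) ^ 2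
    rw [show π * (m:ℝ) * (H/g) = π * m * H / g by ring]
    ring
  have hFnonneg : ∀ m, 0 ≤ F m := fun m => sq_nonneg _
  set h : ℕ → ℕ → ℝ := fun d m => if Nat.gcd m g = g / d ∧ 1 ≤ m then F m else 0 with hhdef
  have hhle : ∀ d m, h d m ≤ F m := by
    intro d m
    by_cases hc : Nat.gcd m g = g / d ∧ 1 ≤ m <;> simp [hhdef, hc, hFnonneg m]
  have hhnonneg : ∀ d m, 0 ≤ h d m := by
    intro d m
    by_cases hc : Nat.gcd m g = g / d ∧ 1 ≤ m <;> simp [hhdef, hc, hFnonneg m]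
  have hhsummable : ∀ d, Summable (h d) :=
    fun d => Summable.of_nonneg_of_le (hhnonneg d) (hhle d) hF.summable
  have hpt : ∀ m, F m = ∑ d ∈ g.divisors, h d m := by
    intro m
    rcases Nat.eq_zero_or_pos m with hm | hm
    · subst hm
      simp [hhdef, hFdef]
    · have hgcd : Nat.gcd m g ∣ g := Nat.gcd_dvd_right m g
      have hmem : g / Nat.gcd m g ∈ g.divisors :=
        Nat.mem_divisors.mpr ⟨Nat.div_dvd_of_dvd hgcd, hg0⟩
      rw [Finset.sum_eq_single_of_mem (g / Nat.gcd m g) hmem]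
      · have hc : Nat.gcd m g = g / (g / Nat.gcd m g) ∧ 1 ≤ m :=
          ⟨(Nat.div_div_self hgcd hg0).symm, hm⟩
        show F m = if Nat.gcd m g = g / (g / Nat.gcd m g) ∧ 1 ≤ m then F m else 0
        rw [if_pos hc]
      · intro d hd hne
        rcases Nat.mem_divisors.mp hd with ⟨hdvd, -⟩
        have hc : ¬ (Nat.gcd m g = g / d ∧ 1 ≤ m) := by
          rintro ⟨he, -⟩
          exact hne (by rw [he, Nat.div_div_self hdvd hg0])
        show (if Nat.gcd m g = g / d ∧ 1 ≤ m then F m else 0) = 0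
        rw [if_neg hc]
  have hFs : ∑' m, F m = ∑ d ∈ g.divisors, ∑' m, h d m := by
    rw [tsum_congr hpt, Summable.tsum_finsetSum (fun d _ => hhsummable d)]
  have hper : ∀ d ∈ g.divisors, ∑' m, h d m = gam H d := by
    intro d hd
    rcases Nat.mem_divisors.mp hd with ⟨hdvd, -⟩
    have hd0 : d ≠ 0 := by rintro rfl; exact hg0 (Nat.eq_zero_of_zero_dvd hdvd)
    set e := g / d with hedef
    have hed : e * d = g := Nat.div_mul_cancel hdvd
    have he0 : e ≠ 0 := by
      intro h0
      rw [h0, zero_mul] at hed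
      exact hg0 hed.symm
    have heR : (e:ℝ) ≠ 0 := Nat.cast_ne_zero.mpr he0
    have hdR : (d:ℝ) ≠ 0 := Nat.cast_ne_zero.mpr hd0
    have hkey : ∀ n : ℕ, F (e * n) = ((d : ℝ) / (π * n) * Real.sin (π * n * H / d)) ^ 2 := by
      intro n
      rcases Nat.eq_zero_or_pos n with hn | hn
      · subst hn; simp [hFdef]
      · have hnR : (n:ℝ) ≠ 0 := Nat.cast_ne_zero.mpr hn.ne'
        show ((g:ℝ) / (π * (e*n : ℕ)) * Real.sin (π * (e*n : ℕ) * H / g)) ^ 2 = _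
        rw [← hed]
        push_cast
        rw [show π * ((e:ℝ) * n) * H / (e * d) = π * n * H / d by field_simp]
        rw [show ((e:ℝ) * d) / (π * (e * n)) = (d:ℝ)/(π * n) by field_simp]
    unfold gam
    refine tsum_eq_tsum_of_ne_zero_bij (i := fun n => e * (n : ℕ)) ?_ ?_ ?_
    · intro a b hab
      exact Subtype.ext (Nat.eq_of_mul_eq_mul_left (Nat.pos_of_ne_zero he0) hab)
    · intro m hm
      simp only [Function.mem_support] at hm
      have hc : Nat.gcd m g = g / d ∧ 1 ≤ m := by
        by_contra hcc
        apply hm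
        show (if Nat.gcd m g = g / d ∧ 1 ≤ m then F m else 0) = 0
        rw [if_neg hcc]
      obtain ⟨hgcdm, hm1⟩ := hc
      have hedvd : e ∣ m := by
        rw [hedef, ← hgcdm]; exact Nat.gcd_dvd_left m g
      obtain ⟨n, rfl⟩ := hedvd
      have hn1 : 1 ≤ n := by
        rcases Nat.eq_zero_or_pos n with rfl | hp
        · simp at hm1
        · exact hp
      have hgcdn : Nat.gcd n d = 1 := by
        have h1 : Nat.gcd (e * n) (e * d) = e * Nat.gcd n d := Nat.gcd_mul_left e n d
        rw [hed] at h1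
        rw [h1] at hgcdm
        have h2 : e * Nat.gcd n d = e * 1 := by rw [hgcdm, mul_one, hedef]
        exact Nat.eq_of_mul_eq_mul_left (Nat.pos_of_ne_zero he0) h2
      refine ⟨⟨n, ?_⟩, rfl⟩
      simp only [Function.mem_support]
      rw [if_pos ⟨hn1, hgcdn⟩, ← hkey n]
      have : h d (e * n) = F (e * n) := by
        show (if Nat.gcd (e*n) g = g / d ∧ 1 ≤ e*n then F (e*n) else 0) = F (e*n)
        rw [if_pos ⟨hgcdm, hm1⟩]
      rw [← this]
      exact hm
    · rintro ⟨n, hn⟩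
      simp only [Function.mem_support] at hn
      have hcond : 1 ≤ n ∧ Nat.gcd n d = 1 := by
        by_contra hc
        rw [if_neg hc] at hn
        exact hn rfl
      obtain ⟨hn1, hgcdn⟩ := hcond
      show h d (e * n) = _
      rw [if_pos ⟨hn1, hgcdn⟩]
      have hcondm : Nat.gcd (e * n) g = g / d ∧ 1 ≤ e * n := by
        constructor
        · rw [← hed, Nat.gcd_mul_left, hgcdn, mul_one, hed, hedef]
        · exact Nat.one_le_iff_ne_zero.mpr (Nat.mul_ne_zero he0 (by omega))
      have : h d (e * n) = F (e * n) := by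
        show (if Nat.gcd (e*n) g = g / d ∧ 1 ≤ e*n then F (e*n) else 0) = F (e*n)
        rw [if_pos hcondm]
      rw [this, hkey n]
  have hfin := hF.tsum_eq
  rw [hFs, Finset.sum_congr rfl hper] at hfin
  rw [hfin]
  ring

/-- The identity behind the main term `S₁`: for `H > 0` and finitely supported `λ : ℕ → ℝ`,
writing `γ_{d,H} = Σ_{m ≥ 1, (m,d)=1} (d/(πm)·sin(πmH/d))²` and `ψ(x) = {x}(1−{x})`,
`Σ_{d₁,d₂ ≥ 1} (λ_{d₁}λ_{d₂}/(d₁d₂))·(d₁,d₂)²·ψ(H/(d₁,d₂))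
  = 2·Σ_{d ≥ 1} γ_{d,H}·(Σ_{m ≥ 1, d ∣ m} λ_m/m)²`. -/
theorem gcd_fract_quadratic_form_identity
    (H : ℝ) (hH : 0 < H) (lam : ℕ → ℝ) (hlam : (Function.support lam).Finite) :
    (∑' d₁ : ℕ, ∑' d₂ : ℕ, if 1 ≤ d₁ ∧ 1 ≤ d₂ then
        lam d₁ * lam d₂ / (d₁ * d₂) * (Nat.gcd d₁ d₂ : ℝ) ^ 2 *
          (Int.fract (H / (Nat.gcd d₁ d₂ : ℝ)) *
            (1 - Int.fract (H / (Nat.gcd d₁ d₂ : ℝ))))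
      else 0) =
    2 * ∑' d : ℕ, (if 1 ≤ d then
        (∑' m : ℕ, if 1 ≤ m ∧ Nat.gcd m d = 1 then
            ((d : ℝ) / (π * m) * sin (π * m * H / d)) ^ 2 else 0) *
        (∑' m : ℕ, if 1 ≤ m ∧ d ∣ m then lam m / m else 0) ^ 2
      else 0) := by
  classical
  set S : Finset ℕ := hlam.toFinset with hSdef
  have hSmem : ∀ m : ℕ, m ∈ S ↔ lam m ≠ 0 := fun m => hlam.mem_toFinset
  set D : Finset ℕ := S.biUnion (fun n => n.divisors) with hDdef
  set B : ℕ → ℕ → ℝ := fun d m => if 1 ≤ m ∧ d ∣ m then lam m / m else 0 with hBdef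
  set A : ℕ → ℝ := fun d => ∑ m ∈ S, B d m with hAdef
  set T : ℕ → ℕ → ℝ := fun d₁ d₂ => if 1 ≤ d₁ ∧ 1 ≤ d₂ then
      lam d₁ * lam d₂ / (d₁ * d₂) * (Nat.gcd d₁ d₂ : ℝ) ^ 2 *
        (Int.fract (H / (Nat.gcd d₁ d₂ : ℝ)) *
          (1 - Int.fract (H / (Nat.gcd d₁ d₂ : ℝ)))) else 0 with hTdef
  -- LHS as double finite sum
  have hT0 : ∀ d₁ : ℕ, ∀ d₂ ∉ S, T d₁ d₂ = 0 := by
    intro d₁ d₂ h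
    have h2 : lam d₂ = 0 := by
      by_contra hne; exact h ((hSmem d₂).mpr hne)
    simp [hTdef, h2]
  have hT0' : ∀ d₁ ∉ S, (∑ d₂ ∈ S, T d₁ d₂) = 0 := by
    intro d₁ h
    have h1 : lam d₁ = 0 := by
      by_contra hne; exact h ((hSmem d₁).mpr hne)
    exact Finset.sum_eq_zero fun d₂ _ => by simp [hTdef, h1]
  have hLHS : (∑' d₁ : ℕ, ∑' d₂ : ℕ, T d₁ d₂) = ∑ d₁ ∈ S, ∑ d₂ ∈ S, T d₁ d₂ := by
    rw [tsum_congr (fun d₁ => tsum_eq_sum (hT0 d₁))]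
    exact tsum_eq_sum hT0'
  -- pointwise decomposition of T
  have hpt : ∀ d₁ ∈ S, ∀ d₂ ∈ S, T d₁ d₂ = ∑ d ∈ D, 2 * (gam H d * (B d d₁ * B d d₂)) := by
    intro d₁ h₁ d₂ h₂
    by_cases hc : 1 ≤ d₁ ∧ 1 ≤ d₂
    · obtain ⟨h11, h21⟩ := hc
      have hg0 : Nat.gcd d₁ d₂ ≠ 0 := fun h => by
        have := Nat.eq_zero_of_gcd_eq_zero_left h; omega
      have hg1 : 1 ≤ Nat.gcd d₁ d₂ := Nat.one_le_iff_ne_zero.mpr hg0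
      have hfil : (Nat.gcd d₁ d₂).divisors = D.filter (fun d => d ∣ d₁ ∧ d ∣ d₂) := by
        ext d
        simp only [Nat.mem_divisors, Finset.mem_filter]
        constructor
        · rintro ⟨hdvd, -⟩
          have hd1 : d ∣ d₁ := hdvd.trans (Nat.gcd_dvd_left d₁ d₂)
          have hd2 : d ∣ d₂ := hdvd.trans (Nat.gcd_dvd_right d₁ d₂)
          refine ⟨Finset.mem_biUnion.mpr ⟨d₁, h₁, Nat.mem_divisors.mpr ⟨hd1, by omega⟩⟩, hd1, hd2⟩
        · rintro ⟨-, hd1, hd2⟩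
          exact ⟨Nat.dvd_gcd hd1 hd2, hg0⟩
      have hdec := gamma_decomp H hg1
      have hTeq : T d₁ d₂ = lam d₁ * lam d₂ / (d₁ * d₂) *
          (2 * ∑ d ∈ (Nat.gcd d₁ d₂).divisors, gam H d) := by
        rw [hTdef]
        simp only [if_pos (⟨h11, h21⟩ : 1 ≤ d₁ ∧ 1 ≤ d₂)]
        rw [mul_assoc, hdec]
      rw [hTeq, hfil, Finset.sum_filter, Finset.mul_sum, Finset.mul_sum]
      refine Finset.sum_congr rfl fun d _ => ?_
      have hB1 : B d d₁ = if d ∣ d₁ then lam d₁ / d₁ else 0 := by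
        rw [hBdef]
        by_cases hd : d ∣ d₁ <;> simp [hd, h11]
      have hB2 : B d d₂ = if d ∣ d₂ then lam d₂ / d₂ else 0 := by
        rw [hBdef]
        by_cases hd : d ∣ d₂ <;> simp [hd, h21]
      rw [hB1, hB2]
      by_cases hd1 : d ∣ d₁ <;> by_cases hd2 : d ∣ d₂ <;>
        simp [hd1, hd2] <;> ring
    · rw [hTdef]
      simp only [if_neg hc]
      symm
      refine Finset.sum_eq_zero fun d _ => ?_
      have : B d d₁ * B d d₂ = 0 := by
        rw [not_and_or] at hc
        rcases hc with hc | hc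
        · have : B d d₁ = 0 := by rw [hBdef]; simp only; rw [if_neg (fun h => hc h.1)]
          rw [this, zero_mul]
        · have : B d d₂ = 0 := by rw [hBdef]; simp only; rw [if_neg (fun h => hc h.1)]
          rw [this, mul_zero]
      rw [this, mul_zero, mul_zero]
  -- LHS equals 2 * Σ_D gam * A²
  have hmain : (∑ d₁ ∈ S, ∑ d₂ ∈ S, T d₁ d₂) = ∑ d ∈ D, 2 * (gam H d * (A d * A d)) := by
    rw [Finset.sum_congr rfl (fun d₁ h₁ => Finset.sum_congr rfl (fun d₂ h₂ => hpt d₁ h₁ d₂ h₂))]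
    calc ∑ d₁ ∈ S, ∑ d₂ ∈ S, ∑ d ∈ D, 2 * (gam H d * (B d d₁ * B d d₂))
        = ∑ d₁ ∈ S, ∑ d ∈ D, ∑ d₂ ∈ S, 2 * (gam H d * (B d d₁ * B d d₂)) :=
          Finset.sum_congr rfl fun d₁ _ => Finset.sum_comm
      _ = ∑ d ∈ D, ∑ d₁ ∈ S, ∑ d₂ ∈ S, 2 * (gam H d * (B d d₁ * B d d₂)) := Finset.sum_comm
      _ = ∑ d ∈ D, 2 * (gam H d * (A d * A d)) := Finset.sum_congr rfl fun d _ => by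
            rw [hAdef]
            simp only [Finset.mul_sum, Finset.sum_mul]
            exact Finset.sum_comm
  have hA : ∀ d : ℕ, (∑' m : ℕ, B d m) = A d := fun d =>
    tsum_eq_sum (fun m hm => by
      have h0 : lam m = 0 := by by_contra hne; exact hm ((hSmem m).mpr hne)
      simp [hBdef, h0])
  have hDpos : ∀ d ∈ D, 1 ≤ d := by
    intro d hd
    rcases Finset.mem_biUnion.mp hd with ⟨n, -, hn⟩
    exact Nat.pos_of_mem_divisors hn
  have hR0 : ∀ d ∉ D, (if 1 ≤ d then gam H d * A d ^ 2 else 0) = 0 := by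
    intro d hd
    by_cases h1 : 1 ≤ d
    · rw [if_pos h1]
      have hA0 : A d = 0 := by
        rw [hAdef]
        refine Finset.sum_eq_zero fun m hm => ?_
        show (if 1 ≤ m ∧ d ∣ m then lam m / (m:ℝ) else 0) = 0
        by_cases hc : 1 ≤ m ∧ d ∣ m
        · exact absurd (Finset.mem_biUnion.mpr ⟨m, hm,
            Nat.mem_divisors.mpr ⟨hc.2, by omega⟩⟩) hd
        · rw [if_neg hc]
      rw [hA0]; ring
    · rw [if_neg h1]
  have hRHS : (∑' d : ℕ, if 1 ≤ d then gam H d * (∑' m : ℕ, B d m) ^ 2 else 0)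
      = ∑ d ∈ D, gam H d * A d ^ 2 := by
    have hcg : ∀ d : ℕ, (if 1 ≤ d then gam H d * (∑' m : ℕ, B d m) ^ 2 else 0)
        = (if 1 ≤ d then gam H d * A d ^ 2 else 0) := fun d => by rw [hA d]
    rw [tsum_congr hcg, tsum_eq_sum hR0]
    exact Finset.sum_congr rfl fun d hd => if_pos (hDpos d hd)
  show (∑' d₁ : ℕ, ∑' d₂ : ℕ, T d₁ d₂)
      = 2 * ∑' d : ℕ, (if 1 ≤ d then gam H d * (∑' m : ℕ, B d m) ^ 2 else 0)
  rw [hLHS, hmain, hRHS, Finset.mul_sum]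
  exact Finset.sum_congr rfl fun d _ => by ring
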